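/- arXiv:2506.17340 — 2 statements merged into one kernel-verified Lean document; each statement's English description precedes it below -/
import Mathlib

section
/- Tweedie's formula: under the same setting, E[x_0 | x_t] = (1/μ_t)(x_t + σ_t² ∇ log p_t(x_t)). -/
open MeasureTheory Real

/-- Isotropic Gaussian density on `ℝ^N` with standard deviation `σ`. -/
noncomputable def gaussPdf (N : ℕ) (σ : ℝ) (z : EuclideanSpace ℝ (Fin N)) : ℝ :=
  (2 * π * σ ^ 2) ^ (-(N : ℝ) / 2) * Real.exp (-‖z‖ ^ 2 / (2 * σ ^ 2))

/-!
Differentiating under the integral sign, `∇p(x) = -σ⁻² ∫ f(y) φ(x - μy) (x - μy) dy` with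
`φ = gaussPdf N σ`; this is legitimate because `φ(z) ‖z‖` is bounded, so the derivatives are
dominated by a multiple of `|f|`. Splitting `x - μy` turns the right-hand side into
`σ⁻² (μ ∫ f(y) φ(x - μy) y dy - p(x) x)`, and `∇ log p = ∇p / p` gives the formula.
-/

open InnerProductSpace Filter Topology

section Gradient

variable {H : Type*} [NormedAddCommGroup H] [InnerProductSpace ℝ H] [CompleteSpace H]
  {f : H → ℝ} {g : H} {x : H}

theorem HasGradientAt.const_mul (c : ℝ) (hf : HasGradientAt f g x) :
    HasGradientAt (fun y => c * f y) (c • g) x := by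
  rw [hasGradientAt_iff_hasFDerivAt, map_smul]
  exact hf.hasFDerivAt.const_mul c

theorem HasGradientAt.log (hf : HasGradientAt f g x) (hx : f x ≠ 0) :
    HasGradientAt (fun y => Real.log (f y)) ((f x)⁻¹ • g) x := by
  rw [hasGradientAt_iff_hasFDerivAt, map_smul]
  exact hf.hasFDerivAt.log hx

theorem hasGradientAt_integral_of_dominated_of_gradient_le {α : Type*} [MeasurableSpace α]
    {μ : Measure α} {F : H → α → ℝ} {F' : H → α → H} {x₀ : H} {bound : α → ℝ} {s : Set H}
    (hs : s ∈ 𝓝 x₀) (hF_meas : ∀ᶠ x in 𝓝 x₀, AEStronglyMeasurable (F x) μ)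
    (hF_int : Integrable (F x₀) μ) (hF'_meas : AEStronglyMeasurable (F' x₀) μ)
    (h_bound : ∀ᵐ a ∂μ, ∀ x ∈ s, ‖F' x a‖ ≤ bound a) (bound_integrable : Integrable bound μ)
    (h_diff : ∀ᵐ a ∂μ, ∀ x ∈ s, HasGradientAt (F · a) (F' x a) x) :
    HasGradientAt (fun x => ∫ a, F x a ∂μ) (∫ a, F' x₀ a ∂μ) x₀ := by
  have hcomm : ∫ a, toDual ℝ H (F' x₀ a) ∂μ = toDual ℝ H (∫ a, F' x₀ a ∂μ) :=
    (toDual ℝ H).toLinearIsometry.integral_comp_comm _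
  rw [hasGradientAt_iff_hasFDerivAt, ← hcomm]
  refine hasFDerivAt_integral_of_dominated_of_fderiv_le hs hF_meas hF_int
    ((toDual ℝ H).continuous.comp_aestronglyMeasurable hF'_meas) ?_ bound_integrable h_diff
  simpa only [LinearIsometryEquiv.norm_map] using h_bound

end Gradient

theorem mul_exp_neg_sq_div_le {σ : ℝ} (hσ : 0 < σ) (t : ℝ) :
    t * exp (-t ^ 2 / (2 * σ ^ 2)) ≤ σ := by
  have hexp : t / σ ≤ exp (t ^ 2 / (2 * σ ^ 2)) := calc
    t / σ ≤ (t / σ) ^ 2 / 2 + 1 := by nlinarith [sq_nonneg (t / σ - 1)]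
    _ = t ^ 2 / (2 * σ ^ 2) + 1 := by ring
    _ ≤ exp (t ^ 2 / (2 * σ ^ 2)) := add_one_le_exp _
  rw [neg_div, exp_neg, ← div_eq_mul_inv, div_le_iff₀ (exp_pos _)]
  rwa [div_le_iff₀ hσ, mul_comm] at hexp

section Gaussian

variable {N : ℕ} {σ : ℝ}

theorem gaussPdf_nonneg (z : EuclideanSpace ℝ (Fin N)) : 0 ≤ gaussPdf N σ z := by
  unfold gaussPdf; positivity

theorem gaussPdf_zero : gaussPdf N σ 0 = (2 * π * σ ^ 2) ^ (-(N : ℝ) / 2) := by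
  simp [gaussPdf]

theorem gaussPdf_le_gaussPdf_zero (z : EuclideanSpace ℝ (Fin N)) :
    gaussPdf N σ z ≤ gaussPdf N σ 0 := by
  have hexp : -‖z‖ ^ 2 / (2 * σ ^ 2) ≤ 0 :=
    div_nonpos_of_nonpos_of_nonneg (neg_nonpos.2 (sq_nonneg _)) (by positivity)
  rw [gaussPdf_zero, gaussPdf]
  exact mul_le_of_le_one_right (by positivity) (exp_le_one_iff.2 hexp)

theorem gaussPdf_mul_norm_le (hσ : 0 < σ) (z : EuclideanSpace ℝ (Fin N)) :
    gaussPdf N σ z * ‖z‖ ≤ gaussPdf N σ 0 * σ := by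
  rw [gaussPdf_zero, gaussPdf, mul_assoc, mul_comm (exp _)]
  exact mul_le_mul_of_nonneg_left (mul_exp_neg_sq_div_le hσ ‖z‖) (by positivity)

@[fun_prop]
theorem continuous_gaussPdf : Continuous (gaussPdf N σ) := by
  unfold gaussPdf; fun_prop

theorem hasGradientAt_gaussPdf (z : EuclideanSpace ℝ (Fin N)) :
    HasGradientAt (gaussPdf N σ) ((-(σ ^ 2)⁻¹ * gaussPdf N σ z) • z) z := by
  have h := (((hasStrictFDerivAt_norm_sq z).hasFDerivAt.const_mul (-(2 * σ ^ 2)⁻¹)).exp).const_mul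
    ((2 * π * σ ^ 2) ^ (-(N : ℝ) / 2))
  have hfun : gaussPdf N σ = fun y => (2 * π * σ ^ 2) ^ (-(N : ℝ) / 2) *
      exp (-(2 * σ ^ 2)⁻¹ * ‖y‖ ^ 2) := by
    funext y; rw [gaussPdf]; congr 2; ring
  rw [hasGradientAt_iff_hasFDerivAt, hfun]
  refine h.congr_fderiv ?_
  ext w
  simp only [neg_mul, neg_smul, smul_neg, neg_apply, smul_apply, coe_innerSL_apply,
    nsmul_eq_mul, smul_eq_mul, map_neg, map_smul, toDual_apply_apply]
  ring

end Gaussian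

section GaussianConvolution

variable {N : ℕ} {σ : ℝ} {f : EuclideanSpace ℝ (Fin N) → ℝ}

theorem norm_mul_gaussPdf_smul_le (hσ : 0 < σ) (c : ℝ) (z : EuclideanSpace ℝ (Fin N)) :
    ‖(c * gaussPdf N σ z) • z‖ ≤ ‖c‖ * (gaussPdf N σ 0 * σ) := by
  rw [norm_smul, norm_mul, norm_of_nonneg (gaussPdf_nonneg z), mul_assoc]
  exact mul_le_mul_of_nonneg_left (gaussPdf_mul_norm_le hσ z) (norm_nonneg c)

theorem MeasureTheory.Integrable.mul_gaussPdf (hf : Integrable f) (μ : ℝ)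
    (x : EuclideanSpace ℝ (Fin N)) : Integrable (fun y => f y * gaussPdf N σ (x - μ • y)) :=
  hf.mul_bdd (by fun_prop) (ae_of_all _ fun y => by
    rw [norm_of_nonneg (gaussPdf_nonneg _)]
    exact gaussPdf_le_gaussPdf_zero _)

theorem MeasureTheory.Integrable.mul_gaussPdf_smul (hf : Integrable f) (hσ : 0 < σ) (μ : ℝ)
    (x : EuclideanSpace ℝ (Fin N)) :
    Integrable (fun y => (f y * gaussPdf N σ (x - μ • y)) • (x - μ • y)) :=
  (hf.norm.mul_const _).mono' ((hf.mul_gaussPdf μ x).aestronglyMeasurable.smul (by fun_prop))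
    (ae_of_all _ fun y => norm_mul_gaussPdf_smul_le hσ (f y) (x - μ • y))

theorem hasGradientAt_integral_mul_gaussPdf (hf : Integrable f) (hσ : 0 < σ) (μ : ℝ)
    (x : EuclideanSpace ℝ (Fin N)) :
    HasGradientAt (fun x' => ∫ y, f y * gaussPdf N σ (x' - μ • y))
      ((-(σ ^ 2)⁻¹) • ∫ y, (f y * gaussPdf N σ (x - μ • y)) • (x - μ • y)) x := by
  rw [← integral_smul]
  refine hasGradientAt_integral_of_dominated_of_gradient_le
    (F := fun x' y => f y * gaussPdf N σ (x' - μ • y))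
    (F' := fun x' y => (-(σ ^ 2)⁻¹) • ((f y * gaussPdf N σ (x' - μ • y)) • (x' - μ • y)))
    (bound := fun y => (σ ^ 2)⁻¹ * (‖f y‖ * (gaussPdf N σ 0 * σ))) univ_mem
    (Eventually.of_forall fun x' => (hf.mul_gaussPdf μ x').aestronglyMeasurable)
    (hf.mul_gaussPdf μ x) ((hf.mul_gaussPdf_smul hσ μ x).aestronglyMeasurable.fun_const_smul _)
    (ae_of_all _ fun y x' _ => ?_) ((hf.norm.mul_const _).const_mul _)
    (ae_of_all _ fun y x' _ => ?_)
  · rw [norm_smul, norm_neg, norm_inv, norm_pow, norm_of_nonneg hσ.le]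
    gcongr
    exact norm_mul_gaussPdf_smul_le hσ (f y) (x' - μ • y)
  · have hg : HasGradientAt (fun x'' => gaussPdf N σ (x'' - μ • y))
        ((-(σ ^ 2)⁻¹ * gaussPdf N σ (x' - μ • y)) • (x' - μ • y)) x' :=
      (hasFDerivAt_comp_sub (μ • y)).2 (hasGradientAt_gaussPdf _)
    convert hg.const_mul (f y) using 1
    rw [smul_smul, smul_smul, mul_left_comm]

end GaussianConvolution

theorem tweedie_formula_general
    (N : ℕ) (μt σt : ℝ) (hμ : 0 < μt) (hσ : 0 < σt)
    (f : EuclideanSpace ℝ (Fin N) → ℝ)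
    (hf_prob : ∫ y, f y = 1)
    (p : EuclideanSpace ℝ (Fin N) → ℝ)
    (hp : ∀ x, p x = ∫ y, f y * gaussPdf N σt (x - μt • y))
    (x : EuclideanSpace ℝ (Fin N))
    (hpos : 0 < p x) :
    (p x)⁻¹ • ∫ y, (f y * gaussPdf N σt (x - μt • y)) • y
      = (1 / μt) • (x + σt ^ 2 • gradient (fun z => Real.log (p z)) x) := by
  have hf : Integrable f := Integrable.of_integral_ne_zero (by rw [hf_prob]; exact one_ne_zero)
  set k := fun y => f y * gaussPdf N σt (x - μt • y)
  have hgrad : HasGradientAt p ((-(σt ^ 2)⁻¹) • ∫ y, k y • (x - μt • y)) x := by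
    rw [funext hp]
    exact hasGradientAt_integral_mul_gaussPdf hf hσ μt x
  have hmean : ∫ y, k y • y = μt⁻¹ • (p x • x - ∫ y, k y • (x - μt • y)) := by
    have hk : ∀ y, k y • y = μt⁻¹ • (k y • x - k y • (x - μt • y)) := fun y => by
      rw [← smul_sub, sub_sub_cancel, smul_comm, inv_smul_smul₀ hμ.ne']
    simp_rw [hk]
    rw [integral_smul, integral_sub ((hf.mul_gaussPdf μt x).smul_const x)
      (hf.mul_gaussPdf_smul hσ μt x), integral_smul_const, hp x]
  rw [(hgrad.log hpos.ne').gradient, hmean]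
  match_scalars <;> field_simp

/-- Tweedie's formula: if `x_t = μ_t x_0 + σ_t ε` with `ε ~ N(0, I)` independent of `x_0`
(which has density `f`), `p` the marginal density of `x_t`, then
`E[x_0 | x_t = x] = (1/μ_t) (x + σ_t² ∇ log p (x))`, where
`E[x_0 | x_t = x] = (p x)⁻¹ • ∫ (f y * N(x; μ_t y, σ_t² I)) • y dy`. -/
theorem tweedie_formula
    (N : ℕ) (μt σt : ℝ) (hμ : 0 < μt) (hσ : 0 < σt)
    (f : EuclideanSpace ℝ (Fin N) → ℝ)
    (hf_meas : Measurable f) (hf_nonneg : ∀ y, 0 ≤ f y)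
    (hf_prob : ∫ y, f y = 1)
    (p : EuclideanSpace ℝ (Fin N) → ℝ)
    (hp : ∀ x, p x = ∫ y, f y * gaussPdf N σt (x - μt • y))
    (x : EuclideanSpace ℝ (Fin N))
    (hpos : 0 < p x)
    (hint1 : Integrable (fun y => f y * gaussPdf N σt (x - μt • y)))
    (hint2 : Integrable (fun y => (f y * gaussPdf N σt (x - μt • y)) • y))
    (hdiff : DifferentiableAt ℝ p x) :
    (p x)⁻¹ • ∫ y, (f y * gaussPdf N σt (x - μt • y)) • y
      = (1 / μt) • (x + σt ^ 2 • gradient (fun z => Real.log (p z)) x) :=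
  tweedie_formula_general N μt σt hμ hσ f hf_prob p hp x hpos
end

section
/- If the conditional law of x_{s} given (x_t, x_0) is N(μ_s x_0 + γ_t (x_t - μ_t x_0)/σ_t, λ_t² I) with γ_t² + λ_t² = σ_s², and the law of x_t given x_0 is N(μ_t x_0, σ_t² I), then the marginal law of x_s given x_0 is N(μ_s x_0, σ_s² I). -/
/-!
The kernel `x ↦ N(a + c x, w)` is `N(0, w)` translated by an affine function of `x`, so pushing
`N(m, v)` through it gives the convolution of the affine image `N(a + c m, c² v)` with `N(0, w)`,
that is `N(a + c m, c² v + w)`. For the DDIM kernel `c = γ / σ_t`, so the variance is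
`γ² + λ² = σ_s²` and the mean is `μ_s x_0`.
-/

open MeasureTheory ProbabilityTheory
open scoped NNReal

namespace MeasureTheory.Measure

lemma bind_map_const_add_eq_map_conv {α G : Type*} [MeasurableSpace α] [AddMonoid G]
    [MeasurableSpace G] [MeasurableAdd₂ G] (μ : Measure α) (ν : Measure G) [SFinite ν]
    {f : α → G} (hf : Measurable f) :
    μ.bind (fun x ↦ ν.map (f x + ·)) = μ.map f ∗ ν := by
  have hκ : Measurable fun x ↦ ν.map (f x + ·) := by
    refine measurable_of_measurable_coe _ fun s hs ↦ ?_
    simp_rw [map_apply (measurable_const_add _) hs]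
    exact (measurable_measure_prodMk_left (measurable_add hs)).comp hf
  ext s hs
  have hadd : MeasurableSet ((fun p : G × G ↦ p.1 + p.2) ⁻¹' s) := measurable_add hs
  rw [bind_apply hs hκ.aemeasurable, conv, map_apply measurable_add hs, prod_apply hadd,
    lintegral_map (measurable_measure_prodMk_left hadd) hf]
  refine lintegral_congr fun x ↦ ?_
  rw [map_apply (measurable_const_add _) hs]
  rfl

end MeasureTheory.Measure

namespace ProbabilityTheory

lemma gaussianReal_map_const_add_mul (m a c : ℝ) (v : ℝ≥0) :
    (gaussianReal m v).map (fun x ↦ a + c * x)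
      = gaussianReal (a + c * m) ((c ^ 2).toNNReal * v) := by
  rw [show (fun x ↦ a + c * x) = (a + ·) ∘ (c * ·) from rfl,
    ← Measure.map_map (measurable_const_add a) (measurable_const_mul c),
    gaussianReal_map_const_mul, gaussianReal_map_const_add, add_comm,
    Real.toNNReal_of_nonneg (sq_nonneg c)]

lemma gaussianReal_bind_gaussianReal_const_add_mul (m a c : ℝ) (v w : ℝ≥0) :
    (gaussianReal m v).bind (fun x ↦ gaussianReal (a + c * x) w)
      = gaussianReal (a + c * m) ((c ^ 2).toNNReal * v + w) := by
  have hκ : (fun x ↦ gaussianReal (a + c * x) w)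
      = fun x ↦ (gaussianReal 0 w).map ((a + c * x) + ·) := by
    simp_rw [gaussianReal_map_const_add, zero_add]
  rw [hκ, Measure.bind_map_const_add_eq_map_conv _ _ (by fun_prop),
    gaussianReal_map_const_add_mul, gaussianReal_conv_gaussianReal, add_zero]

end ProbabilityTheory

theorem ddim_kernel_marginal_consistency_general
    (μs μt σs σt γ lam : ℝ)
    (hσt : 0 < σt)
    (hγ0 : 0 ≤ γ) (hγs : γ ≤ σs)
    (hlam : lam = Real.sqrt (σs ^ 2 - γ ^ 2))
    (x0 : ℝ) :
    Measure.bind (gaussianReal (μt * x0) (Real.toNNReal (σt ^ 2)))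
        (fun xt => gaussianReal (μs * x0 + γ * (xt - μt * x0) / σt)
          (Real.toNNReal (lam ^ 2)))
      = gaussianReal (μs * x0) (Real.toNNReal (σs ^ 2)) := by
  have hlam_sq : lam ^ 2 = σs ^ 2 - γ ^ 2 := by
    rw [hlam, Real.sq_sqrt (by nlinarith)]
  have hmean : ∀ xt, μs * x0 + γ * (xt - μt * x0) / σt
      = (μs * x0 - γ / σt * (μt * x0)) + γ / σt * xt := fun xt ↦ by
    field_simp
    ring
  simp_rw [hmean]
  rw [gaussianReal_bind_gaussianReal_const_add_mul]
  congr 1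
  · ring
  · ext
    simp only [NNReal.coe_add, NNReal.coe_mul, Real.coe_toNNReal _ (sq_nonneg _)]
    rw [hlam_sq]
    field_simp
    ring

/-- Consistency of the DDIM family of reverse transition kernels with the forward marginals:
if `x_s | (x_t, x_0) ~ N(μ_s x_0 + γ (x_t - μ_t x_0)/σ_t, λ²)` with `γ² + λ² = σ_s²`, and
`x_t | x_0 ~ N(μ_t x_0, σ_t²)`, then the marginal of `x_s` given `x_0` is `N(μ_s x_0, σ_s²)`.
(One-dimensional statement; the `ℝ^N` case with isotropic covariance is its product.) -/
theorem ddim_kernel_marginal_consistency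
    (μs μt σs σt γ lam : ℝ)
    (hμs : 0 < μs) (hμt : 0 < μt) (hσs : 0 < σs) (hσt : 0 < σt)
    (hγ0 : 0 ≤ γ) (hγs : γ ≤ σs)
    (hlam : lam = Real.sqrt (σs ^ 2 - γ ^ 2))
    (x0 : ℝ) :
    Measure.bind (gaussianReal (μt * x0) (Real.toNNReal (σt ^ 2)))
        (fun xt => gaussianReal (μs * x0 + γ * (xt - μt * x0) / σt)
          (Real.toNNReal (lam ^ 2)))
      = gaussianReal (μs * x0) (Real.toNNReal (σs ^ 2)) :=
  ddim_kernel_marginal_consistency_general μs μt σs σt γ lam hσt hγ0 hγs hlam x0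
end
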